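/- Let u_k and v_k be the Lucas sequences of the first and second kind with complex parameters y, z. For all complex x, y, z, r and natural numbers n, the sum over k from 0 to n of (-1)^k * x^(n-k) * r^k * (r * v_{k+1} + (x*y + 2*r*z) * u_k) equals (-1)^n * y * r^(n+1) * u_{n+1}. -/
import Mathlib


open Finset

noncomputable def lucasU (y z : ℂ) : ℕ → ℂ
  | 0 => 0
  | 1 => 1
  | n + 2 => y * lucasU y z (n + 1) - z * lucasU y z n

noncomputable def lucasV (y z : ℂ) : ℕ → ℂ
  | 0 => 2
  | 1 => y
  | n + 2 => y * lucasV y z (n + 1) - z * lucasV y z n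

lemma lucas_key (y z : ℂ) : ∀ m : ℕ,
    lucasV y z (m + 1) + 2 * z * lucasU y z m = y * lucasU y z (m + 1)
  | 0 => by simp [lucasU, lucasV]
  | 1 => by simp [lucasU, lucasV]; ring
  | (m + 2) => by
      have h1 := lucas_key y z m
      have h2 := lucas_key y z (m + 1)
      show lucasV y z (m + 1 + 2) + 2 * z * lucasU y z (m + 2)
          = y * lucasU y z (m + 1 + 2)
      rw [lucasV, lucasU, lucasU]
      linear_combination y * h2 - z * h1

theorem stmt6 (x y z r : ℂ) (n : ℕ) :
    ∑ k ∈ Finset.range (n + 1),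
        (-1 : ℂ) ^ k * x ^ (n - k) * r ^ k *
          (r * lucasV y z (k + 1) + (x * y + 2 * r * z) * lucasU y z k) =
      (-1 : ℂ) ^ n * y * r ^ (n + 1) * lucasU y z (n + 1) := by
  induction n with
  | zero => simp [lucasU, lucasV]; ring
  | succ n ih =>
    rw [Finset.sum_range_succ]
    have hstep : ∑ k ∈ Finset.range (n + 1),
        (-1 : ℂ) ^ k * x ^ (n + 1 - k) * r ^ k *
          (r * lucasV y z (k + 1) + (x * y + 2 * r * z) * lucasU y z k)
        = x * ∑ k ∈ Finset.range (n + 1),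
        (-1 : ℂ) ^ k * x ^ (n - k) * r ^ k *
          (r * lucasV y z (k + 1) + (x * y + 2 * r * z) * lucasU y z k) := by
      rw [Finset.mul_sum]
      refine Finset.sum_congr rfl fun k hk => ?_
      have hk' : k ≤ n := Nat.lt_succ_iff.mp (Finset.mem_range.mp hk)
      have : n + 1 - k = (n - k) + 1 := by omega
      rw [this, pow_succ]; ring
    rw [hstep, ih, Nat.sub_self]
    have hk := lucas_key y z (n + 1)
    simp only [pow_succ, pow_zero]
    linear_combination ((-1 : ℂ) ^ n * (-1) * (r ^ n * r) * r) * hk
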